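/- arXiv:2003.04636 — 3 statements merged into one kernel-verified Lean document; each statement's English description precedes it below -/
import Mathlib

section
/- Let Z₁ and Z₂ be independent random vectors, each distributed as a random vector Z = (Z_1, …, Z_q)ᵀ with E(Z_j) = 0, E(Z_j²) = 1 and E(Z_j⁴) = 3 + Δ < ∞ for all j, satisfying the product-moment factorization E(Z_{l₁}^{α₁} ⋯ Z_{l_k}^{α_k}) = E(Z_{l₁}^{α₁}) ⋯ E(Z_{l_k}^{α_k}) for all distinct indices l₁ ≠ ⋯ ≠ l_k and nonnegative integers with α₁ + ⋯ + α_k ≤ 8. Then for any symmetric matrix Γ ∈ ℝ^{q×q}: E[(Z₁ᵀ Γ Z₂)⁴] = 3 tr²(Γ²) + 6 tr(Γ⁴) + 6Δ tr(Γ² ⊙ Γ²) + Δ² Σ_{i,j=1}^{q} Γ_{ij}⁴, and consequently E[(Z₁ᵀ Γ Z₂)⁴] ≤ 3 tr²(Γ²) + 6 tr(Γ⁴) + 6Δ tr(Γ⁴) + Δ² tr²(Γ²). -/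
open MeasureTheory ProbabilityTheory Filter Matrix
open scoped BigOperators Classical

noncomputable section

namespace PHT

/-- Population Kendall tau correlation of coordinates `i, j` for a law `ν` on `Fin p → ℝ`,
computed from two independent copies. -/
def kendallPop {p : ℕ} (ν : Measure (Fin p → ℝ)) (i j : Fin p) : ℝ :=
  ∫ w : (Fin p → ℝ) × (Fin p → ℝ),
    Real.sign ((w.1 i - w.2 i) * (w.1 j - w.2 j)) ∂(ν.prod ν)

/-- Sample Kendall tau correlation computed from the data `x`. -/
def kendallSample {n p : ℕ} (x : Fin n → Fin p → ℝ) (i j : Fin p) : ℝ :=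
  (2 / ((n : ℝ) * ((n : ℝ) - 1))) *
    ∑ s : Fin n, ∑ t : Fin n,
      if s < t then Real.sign ((x s i - x t i) * (x s j - x t j)) else 0

/-- Index set of strongly correlated pairs at threshold `τ0`. -/
def setA1 {p : ℕ} (τ : Fin p → Fin p → ℝ) (τ0 : ℝ) : Finset (Fin p × Fin p) :=
  Finset.univ.filter fun ij => ij.1 < ij.2 ∧ τ0 < τ ij.1 ij.2

/-- Index set of coordinates with little correlation with the others, at threshold `τ0`. -/
def setA2 {p : ℕ} (τ : Fin p → Fin p → ℝ) (τ0 : ℝ) : Finset (Fin p) :=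
  Finset.univ.filter fun i => ∀ j, j ≠ i → τ i j < τ0

/-- The 2×p selection matrix with rows `eᵢ`, `eⱼ`. -/
def P2 {p : ℕ} (i j : Fin p) : Matrix (Fin 2) (Fin p) ℝ :=
  fun r c => if r = 0 then (if c = i then (1 : ℝ) else 0) else (if c = j then 1 else 0)

/-- The 1×p selection matrix `eᵢ`. -/
def P1 {p : ℕ} (i : Fin p) : Matrix (Fin 1) (Fin p) ℝ :=
  fun _ c => if c = i then (1 : ℝ) else 0

/-- The pairwise-Hotelling weighting matrix built from a p×p matrix `G` and index sets. -/
def PO {p : ℕ} (G : Matrix (Fin p) (Fin p) ℝ)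
    (A1 : Finset (Fin p × Fin p)) (A2 : Finset (Fin p)) : Matrix (Fin p) (Fin p) ℝ :=
  (∑ ij ∈ A1, (P2 ij.1 ij.2)ᵀ * (P2 ij.1 ij.2 * G * (P2 ij.1 ij.2)ᵀ)⁻¹ * P2 ij.1 ij.2) +
    ∑ i ∈ A2, (P1 i)ᵀ * (P1 i * G * (P1 i)ᵀ)⁻¹ * P1 i

/-- Sample mean of the observations indexed by `K`. -/
def sampleMeanOn {n p : ℕ} (x : Fin n → Fin p → ℝ) (K : Finset (Fin n)) : Fin p → ℝ :=
  fun i => (∑ k ∈ K, x k i) / (K.card : ℝ)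

/-- Sample covariance matrix of the observations indexed by `K`. -/
def sampleCovOn {n p : ℕ} (x : Fin n → Fin p → ℝ) (K : Finset (Fin n)) :
    Matrix (Fin p) (Fin p) ℝ :=
  fun i j =>
    (∑ k ∈ K, (x k i - sampleMeanOn x K i) * (x k j - sampleMeanOn x K j)) / ((K.card : ℝ) - 1)

/-- Sample covariance matrix of the full data. -/
def sampleCov {n p : ℕ} (x : Fin n → Fin p → ℝ) : Matrix (Fin p) (Fin p) ℝ :=
  sampleCovOn x Finset.univ

/-- Bilinear form `vᵀ M w`. -/
def quadForm {p : ℕ} (M : Matrix (Fin p) (Fin p) ℝ) (v w : Fin p → ℝ) : ℝ :=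
  v ⬝ᵥ M.mulVec w

/-- Frobenius norm of a matrix. -/
def frob {m n : ℕ} (A : Matrix (Fin m) (Fin n) ℝ) : ℝ :=
  Real.sqrt (∑ i, ∑ j, (A i j) ^ 2)

/-- The one-sample pairwise Hotelling statistic `T₁(τ₀)`. -/
def T1stat {n p : ℕ} (x : Fin n → Fin p → ℝ) (mu0 : Fin p → ℝ) (τ0 : ℝ) : ℝ :=
  (1 / ((n : ℝ) * ((n : ℝ) - 1))) *
    ∑ s : Fin n, ∑ t : Fin n,
      if t ≠ s then
        quadForm
          (PO (sampleCovOn x (Finset.univ \ {s, t}))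
            (setA1 (fun i j => |kendallSample x i j|) τ0)
            (setA2 (fun i j => |kendallSample x i j|) τ0))
          (fun i => x s i - mu0 i) (fun i => x t i - mu0 i)
      else 0

/-- The one-sample estimator of `tr(Λ₁²)`. -/
def trHat1 {n p : ℕ} (x : Fin n → Fin p → ℝ) (τ0 : ℝ) : ℝ :=
  (1 / ((n : ℝ) * ((n : ℝ) - 1))) *
    ∑ s : Fin n, ∑ t : Fin n,
      if t ≠ s then
        quadForm
          (PO (sampleCovOn x (Finset.univ \ {s, t}))
            (setA1 (fun i j => |kendallSample x i j|) τ0)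
            (setA2 (fun i j => |kendallSample x i j|) τ0))
          (fun i => x s i - sampleMeanOn x (Finset.univ \ {s, t}) i) (x t) *
        quadForm
          (PO (sampleCovOn x (Finset.univ \ {s, t}))
            (setA1 (fun i j => |kendallSample x i j|) τ0)
            (setA2 (fun i j => |kendallSample x i j|) τ0))
          (fun i => x t i - sampleMeanOn x (Finset.univ \ {s, t}) i) (x s)
      else 0

/-- Pooled two-sample Kendall tau estimates. -/
def pooledTauHat {n1 n2 p : ℕ} (x : Fin n1 → Fin p → ℝ) (y : Fin n2 → Fin p → ℝ)
    (i j : Fin p) : ℝ :=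
  ((n1 : ℝ) * |kendallSample x i j| + (n2 : ℝ) * |kendallSample y i j|) / ((n1 : ℝ) + (n2 : ℝ))

/-- Pooled sample covariance without observations `s`, `t` of group 1. -/
def S1star {n1 n2 p : ℕ} (x : Fin n1 → Fin p → ℝ) (y : Fin n2 → Fin p → ℝ) (s t : Fin n1) :
    Matrix (Fin p) (Fin p) ℝ :=
  ((n1 : ℝ) + (n2 : ℝ) - 2)⁻¹ •
    (((n1 : ℝ) - 2) • sampleCovOn x (Finset.univ \ {s, t}) + (n2 : ℝ) • sampleCov y)

/-- Pooled sample covariance without observations `s`, `t` of group 2. -/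
def S2star {n1 n2 p : ℕ} (x : Fin n1 → Fin p → ℝ) (y : Fin n2 → Fin p → ℝ) (s t : Fin n2) :
    Matrix (Fin p) (Fin p) ℝ :=
  ((n1 : ℝ) + (n2 : ℝ) - 2)⁻¹ •
    ((n1 : ℝ) • sampleCov x + ((n2 : ℝ) - 2) • sampleCovOn y (Finset.univ \ {s, t}))

/-- Pooled sample covariance without observation `s` of group 1 and `t` of group 2. -/
def S12star {n1 n2 p : ℕ} (x : Fin n1 → Fin p → ℝ) (y : Fin n2 → Fin p → ℝ)
    (s : Fin n1) (t : Fin n2) : Matrix (Fin p) (Fin p) ℝ :=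
  ((n1 : ℝ) + (n2 : ℝ) - 2)⁻¹ •
    (((n1 : ℝ) - 1) • sampleCovOn x (Finset.univ \ {s}) +
      ((n2 : ℝ) - 1) • sampleCovOn y (Finset.univ \ {t}))

/-- The two-sample pairwise Hotelling statistic `T₂(τ₀)`. -/
def T2stat {n1 n2 p : ℕ} (x : Fin n1 → Fin p → ℝ) (y : Fin n2 → Fin p → ℝ) (τ0 : ℝ) : ℝ :=
  (1 / ((n1 : ℝ) * ((n1 : ℝ) - 1))) *
      (∑ s : Fin n1, ∑ t : Fin n1,
        if t ≠ s then
          quadForm (PO (S1star x y s t) (setA1 (pooledTauHat x y) τ0)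
            (setA2 (pooledTauHat x y) τ0)) (x s) (x t)
        else 0) +
    (1 / ((n2 : ℝ) * ((n2 : ℝ) - 1))) *
      (∑ s : Fin n2, ∑ t : Fin n2,
        if t ≠ s then
          quadForm (PO (S2star x y s t) (setA1 (pooledTauHat x y) τ0)
            (setA2 (pooledTauHat x y) τ0)) (y s) (y t)
        else 0) -
    (2 / ((n1 : ℝ) * (n2 : ℝ))) *
      ∑ s : Fin n1, ∑ t : Fin n2,
        quadForm (PO (S12star x y s t) (setA1 (pooledTauHat x y) τ0)
          (setA2 (pooledTauHat x y) τ0)) (x s) (y t)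

/-- The two-sample estimator of `tr(Λ₁²)`. -/
def trHat2 {n1 n2 p : ℕ} (x : Fin n1 → Fin p → ℝ) (y : Fin n2 → Fin p → ℝ) (τ0 : ℝ) : ℝ :=
  (1 / (2 * (n1 : ℝ) * ((n1 : ℝ) - 1))) *
      (∑ s : Fin n1, ∑ t : Fin n1,
        if t ≠ s then
          quadForm (PO (S1star x y s t) (setA1 (pooledTauHat x y) τ0)
              (setA2 (pooledTauHat x y) τ0))
            (fun i => x s i - sampleMeanOn x (Finset.univ \ {s, t}) i) (x t) *
          quadForm (PO (S1star x y s t) (setA1 (pooledTauHat x y) τ0)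
              (setA2 (pooledTauHat x y) τ0))
            (fun i => x t i - sampleMeanOn x (Finset.univ \ {s, t}) i) (x s)
        else 0) +
    (1 / (2 * (n2 : ℝ) * ((n2 : ℝ) - 1))) *
      ∑ s : Fin n2, ∑ t : Fin n2,
        if t ≠ s then
          quadForm (PO (S2star x y s t) (setA1 (pooledTauHat x y) τ0)
              (setA2 (pooledTauHat x y) τ0))
            (fun i => y s i - sampleMeanOn y (Finset.univ \ {s, t}) i) (y t) *
          quadForm (PO (S2star x y s t) (setA1 (pooledTauHat x y) τ0)
              (setA2 (pooledTauHat x y) τ0))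
            (fun i => y t i - sampleMeanOn y (Finset.univ \ {s, t}) i) (y s)
        else 0

/-- The ρ-mixing condition for the coordinate sequence of `X`, with bound `bound s` on the
mixing coefficient at distance `s`; the supremum defining ρ(s) runs over index sets of
cardinality at most two. -/
def rhoMixBound {Ω : Type*} [MeasurableSpace Ω] (μ : Measure Ω) {p : ℕ}
    (X : Ω → Fin p → ℝ) (bound : ℕ → ℝ) : Prop :=
  ∀ (s : ℕ) (A B : Finset (Fin p)), A.card ≤ 2 → B.card ≤ 2 →
    (∀ i ∈ A, ∀ j ∈ B, s ≤ ((i : ℤ) - (j : ℤ)).natAbs) →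
    ∀ g1 g2 : Ω → ℝ,
      Measurable[MeasurableSpace.comap (fun ω (i : A) => X ω i.1) inferInstance] g1 →
      Measurable[MeasurableSpace.comap (fun ω (j : B) => X ω j.1) inferInstance] g2 →
      MemLp g1 2 μ → MemLp g2 2 μ →
      |∫ ω, (g1 ω - ∫ a, g1 a ∂μ) * (g2 ω - ∫ a, g2 a ∂μ) ∂μ| ≤
        bound s * Real.sqrt (∫ ω, (g1 ω - ∫ a, g1 a ∂μ) ^ 2 ∂μ) *
          Real.sqrt (∫ ω, (g2 ω - ∫ a, g2 a ∂μ) ^ 2 ∂μ)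

end PHT

/-!
Expand the fourth power and use independence: `E[(Z₁ᵀΓZ₂)⁴]` is a sum over `a, b, c, d` of
`E[Z₁a Z₁b Z₁c Z₁d] · E[(Γ_a·Z₂)(Γ_b·Z₂)(Γ_c·Z₂)(Γ_d·Z₂)]`. The factorization hypothesis pins
every fourth moment `E[Z_a Z_b Z_c Z_d]` to the Gaussian (Isserlis) value
`δ_ab δ_cd + δ_ac δ_bd + δ_ad δ_bc`, corrected by `Δ` when `a = b = c = d`. Contracting this
tensor twice against `Γ`, the three pairings give `3 tr²(Γ²) + 6 tr(Γ⁴)` and the diagonal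
corrections give the `Δ` and `Δ²` terms. The inequality then only uses
`Σ_x G_xx² ≤ Σ_{x,y} G_xy²` for `G = Γ²` and `Σ t⁴ ≤ (Σ t²)²`.
-/

theorem Finset.prod_univ_pow_count {ι M : Type*} [Fintype ι] [DecidableEq ι] [CommMonoid M]
    (s : Multiset ι) (f : ι → M) : ∏ j, f j ^ s.count j = (s.map f).prod := by
  rw [Finset.prod_multiset_map_count]
  exact (Finset.prod_subset (Finset.subset_univ _) fun j _ hj => by
    rw [Multiset.count_eq_zero_of_notMem (by simpa using hj), pow_zero]).symm

section IsserlisTensor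

variable {ι : Type*} [DecidableEq ι]

/-- Isserlis' formula for `E[Z_a Z_b Z_c Z_d]` of a standard Gaussian vector, with the excess
kurtosis `Δ` added on the diagonal `a = b = c = d`. -/
def isserlisTensor (Δ : ℝ) (a b c d : ι) : ℝ :=
  (if a = b ∧ c = d then 1 else 0) + (if a = c ∧ b = d then 1 else 0) +
    (if a = d ∧ b = c then 1 else 0) + if a = b ∧ a = c ∧ a = d then Δ else 0

theorem sum_mul_isserlisTensor [Fintype ι] (Δ : ℝ) (T : ι → ι → ι → ι → ℝ) :
    ∑ a, ∑ b, ∑ c, ∑ d, T a b c d * isserlisTensor Δ a b c d =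
      ∑ x, ∑ y, (T x x y y + T x y x y + T x y y x) + Δ * ∑ x, T x x x x := by
  simp [isserlisTensor, ite_and, mul_add, Finset.sum_add_distrib, Finset.mul_sum, mul_comm]

/-- Closed form of `∑ a b c d, u a * v b * w c * x d * isserlisTensor Δ a b c d`. -/
def isserlisForm [Fintype ι] (Δ : ℝ) (u v w x : ι → ℝ) : ℝ :=
  (u ⬝ᵥ v) * (w ⬝ᵥ x) + (u ⬝ᵥ w) * (v ⬝ᵥ x) + (u ⬝ᵥ x) * (v ⬝ᵥ w) + Δ * ∑ j, u j * v j * w j * x j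

theorem sum_isserlisForm_mul_isserlisTensor [Fintype ι] (Δ : ℝ) (Γ : Matrix ι ι ℝ) :
    ∑ a, ∑ b, ∑ c, ∑ d,
        isserlisForm Δ (Γ a) (Γ b) (Γ c) (Γ d) * isserlisTensor Δ a b c d =
      3 * (∑ x, Γ x ⬝ᵥ Γ x) ^ 2 + 6 * ∑ x, ∑ y, (Γ x ⬝ᵥ Γ y) ^ 2 +
        3 * Δ * (∑ x, (Γ x ⬝ᵥ Γ x) ^ 2 + ∑ j, (Γᵀ j ⬝ᵥ Γᵀ j) ^ 2) +
        Δ ^ 2 * ∑ x, ∑ j, Γ x j ^ 4 := by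
  have hxy : ∀ x y, isserlisForm Δ (Γ x) (Γ x) (Γ y) (Γ y) +
      isserlisForm Δ (Γ x) (Γ y) (Γ x) (Γ y) + isserlisForm Δ (Γ x) (Γ y) (Γ y) (Γ x) =
        3 * ((Γ x ⬝ᵥ Γ x) * (Γ y ⬝ᵥ Γ y)) + 6 * (Γ x ⬝ᵥ Γ y) ^ 2 +
          3 * Δ * ∑ j, Γ x j ^ 2 * Γ y j ^ 2 := fun x y => by
    simp only [isserlisForm, dotProduct_comm (Γ y) (Γ x)]
    ring_nf
  have hxx : ∀ x, isserlisForm Δ (Γ x) (Γ x) (Γ x) (Γ x) =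
      3 * (Γ x ⬝ᵥ Γ x) ^ 2 + Δ * ∑ j, Γ x j ^ 4 := fun x => by
    simp only [isserlisForm]
    ring_nf
  have hcol : ∑ x, ∑ y, ∑ j, Γ x j ^ 2 * Γ y j ^ 2 = ∑ j, (Γᵀ j ⬝ᵥ Γᵀ j) ^ 2 := by
    calc ∑ x, ∑ y, ∑ j, Γ x j ^ 2 * Γ y j ^ 2
        = ∑ x, ∑ j, ∑ y, Γ x j ^ 2 * Γ y j ^ 2 := Finset.sum_congr rfl fun x _ => Finset.sum_comm
      _ = ∑ j, ∑ x, ∑ y, Γ x j ^ 2 * Γ y j ^ 2 := Finset.sum_comm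
      _ = ∑ j, (Γᵀ j ⬝ᵥ Γᵀ j) ^ 2 := by
          simp only [dotProduct, transpose_apply, sq, Finset.sum_mul_sum]
  rw [sum_mul_isserlisTensor]
  simp only [hxy, hxx, Finset.sum_add_distrib, ← Finset.mul_sum, hcol, sq (∑ _, _),
    Finset.sum_mul_sum]
  ring

end IsserlisTensor

section FactorizedMoments

variable {Ω : Type*} [MeasurableSpace Ω] {μ : Measure Ω} {q : ℕ} {Z : Ω → Fin q → ℝ}

theorem integral_multiset_prod_eq_prod_integral_pow [IsProbabilityMeasure μ] {n : ℕ}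
    (hfact : ∀ (k : ℕ) (l : Fin k → Fin q) (α : Fin k → ℕ), Function.Injective l →
      (∑ i, α i) ≤ n →
      ∫ ω, ∏ i, (Z ω (l i)) ^ (α i) ∂μ = ∏ i, ∫ ω, (Z ω (l i)) ^ (α i) ∂μ)
    (s : Multiset (Fin q)) (hs : Multiset.card s ≤ n) :
    ∫ ω, (s.map (Z ω)).prod ∂μ = ∏ j ∈ s.toFinset, ∫ ω, Z ω j ^ s.count j ∂μ := by
  have h := hfact q id (s.count ·) Function.injective_id (by simpa using hs)
  simp only [id, Finset.prod_univ_pow_count] at h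
  rw [h]
  exact (Finset.prod_subset (Finset.subset_univ _) fun j _ hj => by
    simp [Multiset.count_eq_zero_of_notMem (by simpa using hj)]).symm

variable {Δ : ℝ} (hmean : ∀ j, ∫ ω, Z ω j ∂μ = 0) (hvar : ∀ j, ∫ ω, (Z ω j) ^ 2 ∂μ = 1)
  (hfour : ∀ j, ∫ ω, (Z ω j) ^ 4 ∂μ = 3 + Δ)
include hmean hvar hfour

/- One case for each way the indices `a, b, c, d` can coincide; a factor `∫ Z_j = 0` kills every
case in which some index occurs exactly once. -/
theorem prod_integral_pow_count_eq_isserlisTensor (a b c d : Fin q) :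
    ∏ j ∈ ({a, b, c, d} : Multiset (Fin q)).toFinset,
      ∫ ω, Z ω j ^ ({a, b, c, d} : Multiset (Fin q)).count j ∂μ = isserlisTensor Δ a b c d := by
  by_cases hab : a = b <;> by_cases hac : a = c <;> by_cases had : a = d <;>
    by_cases hbc : b = c <;> by_cases hbd : b = d <;> by_cases hcd : c = d <;>
    subst_vars <;>
    simp_all [isserlisTensor, Finset.prod_insert, Multiset.count_cons, Ne.symm, add_assoc,
      one_add_one_eq_two, two_add_one_eq_three]

theorem integral_mul_mul_mul_eq_isserlisTensor [IsProbabilityMeasure μ]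
    (hfact : ∀ (k : ℕ) (l : Fin k → Fin q) (α : Fin k → ℕ), Function.Injective l →
      (∑ i, α i) ≤ 8 →
      ∫ ω, ∏ i, (Z ω (l i)) ^ (α i) ∂μ = ∏ i, ∫ ω, (Z ω (l i)) ^ (α i) ∂μ)
    (a b c d : Fin q) :
    ∫ ω, Z ω a * Z ω b * Z ω c * Z ω d ∂μ = isserlisTensor Δ a b c d := by
  calc ∫ ω, Z ω a * Z ω b * Z ω c * Z ω d ∂μ
      = ∫ ω, (({a, b, c, d} : Multiset (Fin q)).map (Z ω)).prod ∂μ := by simp [mul_assoc]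
    _ = isserlisTensor Δ a b c d := by
      rw [integral_multiset_prod_eq_prod_integral_pow hfact _ (by simp),
        prod_integral_pow_count_eq_isserlisTensor hmean hvar hfour]

end FactorizedMoments

theorem dotProduct_mul4_eq_sum {ι R : Type*} [Fintype ι] [CommSemiring R] (u v w x z : ι → R) :
    (u ⬝ᵥ z) * (v ⬝ᵥ z) * (w ⬝ᵥ z) * (x ⬝ᵥ z) =
      ∑ a, ∑ b, ∑ c, ∑ d, u a * v b * w c * x d * (z a * z b * z c * z d) := by
  have h (a b c d : ι) : u a * v b * w c * x d * (z a * z b * z c * z d) =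
      u a * z a * (v b * z b) * (w c * z c) * (x d * z d) := by ring
  simp only [h, ← Finset.mul_sum, ← Finset.sum_mul, dotProduct]

section LinearForms

variable {Ω ι : Type*} [MeasurableSpace Ω] {μ : Measure Ω} [Fintype ι]

theorem integral_sum_sum_sum_sum {f : ι → ι → ι → ι → Ω → ℝ}
    (hf : ∀ a b c d, Integrable (f a b c d) μ) :
    ∫ ω, ∑ a, ∑ b, ∑ c, ∑ d, f a b c d ω ∂μ = ∑ a, ∑ b, ∑ c, ∑ d, ∫ ω, f a b c d ω ∂μ := by
  rw [integral_finsetSum _ fun a _ => by fun_prop]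
  congr! with a
  rw [integral_finsetSum _ fun b _ => by fun_prop]
  congr! with b
  rw [integral_finsetSum _ fun c _ => by fun_prop]
  congr! with c
  rw [integral_finsetSum _ fun d _ => hf a b c d]

variable {Z : Ω → ι → ℝ}
  (hint : ∀ a b c d, Integrable (fun ω => Z ω a * Z ω b * Z ω c * Z ω d) μ)
include hint

theorem integrable_dotProduct_mul4 (u v w x : ι → ℝ) :
    Integrable (fun ω => (u ⬝ᵥ Z ω) * (v ⬝ᵥ Z ω) * (w ⬝ᵥ Z ω) * (x ⬝ᵥ Z ω)) μ := by
  simp_rw [dotProduct_mul4_eq_sum]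
  have := fun a b c d => (hint a b c d).const_mul (u a * v b * w c * x d)
  fun_prop

theorem integral_dotProduct_mul4 [DecidableEq ι] {Δ : ℝ}
    (hmom : ∀ a b c d, ∫ ω, Z ω a * Z ω b * Z ω c * Z ω d ∂μ = isserlisTensor Δ a b c d)
    (u v w x : ι → ℝ) :
    ∫ ω, (u ⬝ᵥ Z ω) * (v ⬝ᵥ Z ω) * (w ⬝ᵥ Z ω) * (x ⬝ᵥ Z ω) ∂μ = isserlisForm Δ u v w x := by
  simp_rw [dotProduct_mul4_eq_sum]
  rw [integral_sum_sum_sum_sum fun a b c d => (hint a b c d).const_mul (u a * v b * w c * x d)]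
  simp_rw [integral_const_mul, hmom, sum_mul_isserlisTensor]
  simp only [isserlisForm, dotProduct, Finset.sum_mul_sum, Finset.sum_add_distrib, mul_comm,
    mul_left_comm]

end LinearForms

theorem integral_dotProduct_mulVec_pow_four {Ω ι : Type*} [MeasurableSpace Ω] {μ : Measure Ω}
    [Fintype ι] [DecidableEq ι] {Z₁ Z₂ : Ω → ι → ℝ} {Δ : ℝ}
    (hmeas₁ : Measurable Z₁) (hmeas₂ : Measurable Z₂) (hindep : IndepFun Z₁ Z₂ μ)
    (hint₁ : ∀ a b c d, Integrable (fun ω => Z₁ ω a * Z₁ ω b * Z₁ ω c * Z₁ ω d) μ)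
    (hint₂ : ∀ a b c d, Integrable (fun ω => Z₂ ω a * Z₂ ω b * Z₂ ω c * Z₂ ω d) μ)
    (hmom₁ : ∀ a b c d, ∫ ω, Z₁ ω a * Z₁ ω b * Z₁ ω c * Z₁ ω d ∂μ = isserlisTensor Δ a b c d)
    (hmom₂ : ∀ a b c d, ∫ ω, Z₂ ω a * Z₂ ω b * Z₂ ω c * Z₂ ω d ∂μ = isserlisTensor Δ a b c d)
    (Γ : Matrix ι ι ℝ) :
    ∫ ω, (Z₁ ω ⬝ᵥ Γ *ᵥ Z₂ ω) ^ 4 ∂μ =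
      3 * (∑ x, Γ x ⬝ᵥ Γ x) ^ 2 + 6 * ∑ x, ∑ y, (Γ x ⬝ᵥ Γ y) ^ 2 +
        3 * Δ * (∑ x, (Γ x ⬝ᵥ Γ x) ^ 2 + ∑ j, (Γᵀ j ⬝ᵥ Γᵀ j) ^ 2) +
        Δ ^ 2 * ∑ x, ∑ j, Γ x j ^ 4 := by
  set F : ι → ι → ι → ι → Ω → ℝ := fun a b c d ω =>
    (Γ a ⬝ᵥ Z₂ ω) * (Γ b ⬝ᵥ Z₂ ω) * (Γ c ⬝ᵥ Z₂ ω) * (Γ d ⬝ᵥ Z₂ ω) *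
      (Z₁ ω a * Z₁ ω b * Z₁ ω c * Z₁ ω d)
  have hexpand : ∀ ω, (Z₁ ω ⬝ᵥ Γ *ᵥ Z₂ ω) ^ 4 = ∑ a, ∑ b, ∑ c, ∑ d, F a b c d ω := fun ω => by
    rw [pow_succ, pow_three', dotProduct_comm, dotProduct_mul4_eq_sum]
    rfl
  have hindep' : ∀ a b c d, IndepFun
      (fun ω => (Γ a ⬝ᵥ Z₂ ω) * (Γ b ⬝ᵥ Z₂ ω) * (Γ c ⬝ᵥ Z₂ ω) * (Γ d ⬝ᵥ Z₂ ω))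
      (fun ω => Z₁ ω a * Z₁ ω b * Z₁ ω c * Z₁ ω d) μ := fun a b c d =>
    hindep.symm.comp (φ := fun z : ι → ℝ => (Γ a ⬝ᵥ z) * (Γ b ⬝ᵥ z) * (Γ c ⬝ᵥ z) * (Γ d ⬝ᵥ z))
      (ψ := fun z : ι → ℝ => z a * z b * z c * z d) (by fun_prop) (by fun_prop)
  have hintF : ∀ a b c d, Integrable (F a b c d) μ := fun a b c d =>
    (hindep' a b c d).integrable_mul (integrable_dotProduct_mul4 hint₂ _ _ _ _) (hint₁ a b c d)
  have hintegral : ∀ a b c d, ∫ ω, F a b c d ω ∂μ =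
      isserlisForm Δ (Γ a) (Γ b) (Γ c) (Γ d) * isserlisTensor Δ a b c d := fun a b c d => by
    rw [(hindep' a b c d).integral_fun_mul_eq_mul_integral (by fun_prop) (by fun_prop),
      integral_dotProduct_mul4 hint₂ hmom₂, hmom₁]
  simp_rw [hexpand, integral_sum_sum_sum_sum hintF, hintegral]
  exact sum_isserlisForm_mul_isserlisTensor Δ Γ

namespace Matrix

variable {ι : Type*} [Fintype ι] [DecidableEq ι] {Γ : Matrix ι ι ℝ}

theorem IsSymm.sq_apply (hΓ : Γ.IsSymm) (x y : ι) : (Γ ^ 2) x y = Γ x ⬝ᵥ Γ y := by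
  rw [sq, mul_apply']
  congr 1
  ext j
  exact hΓ.apply y j

theorem IsSymm.trace_sq (hΓ : Γ.IsSymm) : trace (Γ ^ 2) = ∑ x, Γ x ⬝ᵥ Γ x := by
  simp [trace, hΓ.sq_apply]

theorem IsSymm.trace_pow_four (hΓ : Γ.IsSymm) :
    trace (Γ ^ 4) = ∑ x, ∑ y, (Γ x ⬝ᵥ Γ y) ^ 2 := by
  rw [show Γ ^ 4 = Γ ^ 2 * Γ ^ 2 by rw [← pow_add]]
  simp only [trace, diag, mul_apply, hΓ.sq_apply]
  exact Finset.sum_congr rfl fun x _ => Finset.sum_congr rfl fun y _ => by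
    rw [dotProduct_comm (Γ y), sq]

theorem IsSymm.trace_hadamard_sq (hΓ : Γ.IsSymm) :
    trace ((Γ ^ 2) ⊙ (Γ ^ 2)) = ∑ x, (Γ x ⬝ᵥ Γ x) ^ 2 := by
  simp only [trace, diag, hadamard_apply, hΓ.sq_apply, ← sq]

end Matrix

theorem sum_sq_dotProduct_self_le {ι : Type*} [Fintype ι] (Γ : Matrix ι ι ℝ) :
    ∑ x, (Γ x ⬝ᵥ Γ x) ^ 2 ≤ ∑ x, ∑ y, (Γ x ⬝ᵥ Γ y) ^ 2 :=
  Finset.sum_le_sum fun x _ =>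
    Finset.single_le_sum (f := fun y => (Γ x ⬝ᵥ Γ y) ^ 2) (fun _ _ => sq_nonneg _)
      (Finset.mem_univ x)

theorem sum_sum_pow_four_le {ι : Type*} [Fintype ι] (Γ : Matrix ι ι ℝ) :
    ∑ x, ∑ j, Γ x j ^ 4 ≤ (∑ x, Γ x ⬝ᵥ Γ x) ^ 2 := by
  have hrow : ∀ x, Γ x ⬝ᵥ Γ x = ∑ j, Γ x j ^ 2 := fun x => by simp [dotProduct, sq]
  simp only [hrow]
  calc ∑ x, ∑ j, Γ x j ^ 4 = ∑ x, ∑ j, (Γ x j ^ 2) ^ 2 := by simp [← pow_mul]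
    _ ≤ ∑ x, (∑ j, Γ x j ^ 2) ^ 2 :=
      Finset.sum_le_sum fun x _ =>
        Finset.sum_sq_le_sq_sum_of_nonneg fun j _ => sq_nonneg _
    _ ≤ (∑ x, ∑ j, Γ x j ^ 2) ^ 2 :=
      Finset.sum_sq_le_sq_sum_of_nonneg fun x _ => Finset.sum_nonneg fun j _ => sq_nonneg _

/-- For `Z₁, Z₂` independent copies of a random vector with mean zero, unit
variances, fourth moments `3 + Δ` and product-moment factorization up to total order 8,
and a symmetric matrix `Γ`:
`E[(Z₁ᵀΓZ₂)⁴] = 3 tr²(Γ²) + 6 tr(Γ⁴) + 6Δ tr(Γ² ⊙ Γ²) + Δ² Σ_{i,j} Γ_{ij}⁴`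
and consequently `E[(Z₁ᵀΓZ₂)⁴] ≤ 3 tr²(Γ²) + 6 tr(Γ⁴) + 6Δ tr(Γ⁴) + Δ² tr²(Γ²)`. -/
theorem statement7 {Ω : Type*} [MeasurableSpace Ω] (μ : Measure Ω) [IsProbabilityMeasure μ]
    {q : ℕ} (Z₁ Z₂ : Ω → Fin q → ℝ) (Δ : ℝ) (hΔ : 0 ≤ Δ)
    (hmeas1 : Measurable Z₁) (hmeas2 : Measurable Z₂)
    (hindep : IndepFun Z₁ Z₂ μ)
    (hid : μ.map Z₁ = μ.map Z₂)
    (hmean : ∀ j, ∫ ω, Z₁ ω j ∂μ = 0)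
    (hvar : ∀ j, ∫ ω, (Z₁ ω j) ^ 2 ∂μ = 1)
    (hfour : ∀ j, ∫ ω, (Z₁ ω j) ^ 4 ∂μ = 3 + Δ)
    (hint : ∀ α β : Fin q → ℕ, (∑ j, α j) + (∑ j, β j) ≤ 8 →
      Integrable (fun ω => (∏ j, (Z₁ ω j) ^ (α j)) * ∏ j, (Z₂ ω j) ^ (β j)) μ)
    (hfact : ∀ (k : ℕ) (l : Fin k → Fin q) (α : Fin k → ℕ), Function.Injective l →
      (∑ i, α i) ≤ 8 →
      ∫ ω, ∏ i, (Z₁ ω (l i)) ^ (α i) ∂μ = ∏ i, ∫ ω, (Z₁ ω (l i)) ^ (α i) ∂μ)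
    (Γ : Matrix (Fin q) (Fin q) ℝ) (hΓ : Γ.IsSymm) :
    (∫ ω, (Z₁ ω ⬝ᵥ Γ.mulVec (Z₂ ω)) ^ 4 ∂μ =
        3 * Matrix.trace (Γ ^ 2) ^ 2 + 6 * Matrix.trace (Γ ^ 4) +
          6 * Δ * Matrix.trace (Matrix.hadamard (Γ ^ 2) (Γ ^ 2)) +
          Δ ^ 2 * ∑ i : Fin q, ∑ j : Fin q, Γ i j ^ 4) ∧
      ∫ ω, (Z₁ ω ⬝ᵥ Γ.mulVec (Z₂ ω)) ^ 4 ∂μ ≤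
        3 * Matrix.trace (Γ ^ 2) ^ 2 + 6 * Matrix.trace (Γ ^ 4) +
          6 * Δ * Matrix.trace (Γ ^ 4) + Δ ^ 2 * Matrix.trace (Γ ^ 2) ^ 2 := by
  have hint₁ : ∀ a b c d, Integrable (fun ω => Z₁ ω a * Z₁ ω b * Z₁ ω c * Z₁ ω d) μ :=
    fun a b c d => by
      simpa [Finset.prod_univ_pow_count, mul_assoc] using
        hint (({a, b, c, d} : Multiset (Fin q)).count ·) 0 (by simp)
  have hint₂ : ∀ a b c d, Integrable (fun ω => Z₂ ω a * Z₂ ω b * Z₂ ω c * Z₂ ω d) μ :=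
    fun a b c d => by
      simpa [Finset.prod_univ_pow_count, mul_assoc] using
        hint 0 (({a, b, c, d} : Multiset (Fin q)).count ·) (by simp)
  have hmom₁ := integral_mul_mul_mul_eq_isserlisTensor hmean hvar hfour hfact
  have hmom₂ : ∀ a b c d, ∫ ω, Z₂ ω a * Z₂ ω b * Z₂ ω c * Z₂ ω d ∂μ = isserlisTensor Δ a b c d :=
    fun a b c d => by
      rw [← hmom₁]
      exact (IdentDistrib.comp ⟨hmeas1.aemeasurable, hmeas2.aemeasurable, hid⟩
        (u := fun z => z a * z b * z c * z d) (by fun_prop)).integral_eq.symm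
  have h := integral_dotProduct_mulVec_pow_four hmeas1 hmeas2 hindep hint₁ hint₂ hmom₁ hmom₂ Γ
  rw [hΓ.eq] at h
  rw [hΓ.trace_sq, hΓ.trace_pow_four, hΓ.trace_hadamard_sq, h]
  refine ⟨by ring, ?_⟩
  have h₁ := mul_le_mul_of_nonneg_left (sum_sq_dotProduct_self_le Γ) hΔ
  have h₂ := mul_le_mul_of_nonneg_left (sum_sum_pow_four_le Γ) (sq_nonneg Δ)
  linarith
end
end

section
/- Let Σ ∈ ℝ^{p×p} be symmetric positive definite with largest eigenvalue λ₁(Σ) and smallest eigenvalue λ_p(Σ). Let A₁ be a set of pairs (i,j) with 1 ≤ i < j ≤ p, let A₂ be the set of indices in {1, …, p} that appear in no pair of A₁, and suppose K₀ ≥ 1 is an integer such that every index appears in at most K₀ pairs of A₁. Define P_O = Σ_{(i,j)∈A₁} P_{ij}ᵀ (P_{ij} Σ P_{ij}ᵀ)⁻¹ P_{ij} + Σ_{i∈A₂} P_iᵀ (P_i Σ P_iᵀ)⁻¹ P_i. Then P_O is symmetric positive definite and for every unit vector ζ ∈ ℝᵖ, 1/λ₁(Σ) ≤ ζᵀ P_O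 ζ ≤ K₀/λ_p(Σ); equivalently, every eigenvalue of P_O lies in the interval [1/λ₁(Σ), K₀/λ_p(Σ)]. -/
open MeasureTheory ProbabilityTheory Filter Matrix
open scoped BigOperators Classical

noncomputable section

/-! In the Loewner order, `λ_p ≤ Σ ≤ λ₁` passes to every compression `P Σ Pᵀ` by a selection
matrix with orthonormal rows; inversion reverses it, and conjugating back gives
`λ₁⁻¹ PᵀP ≤ Pᵀ (P Σ Pᵀ)⁻¹ P ≤ λ_p⁻¹ PᵀP`. Summed over the blocks of `P_O`, the matrices `PᵀP` add
up to the diagonal matrix counting the blocks that contain each index. Since `A₂` consists exactly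
of the indices lying in no pair, each count is between `1` and `K₀`. -/

open scoped MatrixOrder ComplexOrder

namespace Matrix

section LoewnerOrder

variable {𝕜 n : Type*} [RCLike 𝕜]

theorem PosDef.of_smul_one_le [DecidableEq n] {B : Matrix n n 𝕜} {a : ℝ} (ha : 0 < a)
    (h : a • (1 : Matrix n n 𝕜) ≤ B) : B.PosDef := by
  simpa using (PosDef.one.smul ha).add_posSemidef h

theorem diagonal_le_diagonal [DecidableEq n] {d e : n → 𝕜} (h : ∀ i, d i ≤ e i) :
    diagonal d ≤ diagonal e := by
  rw [le_iff, diagonal_sub, posSemidef_diagonal_iff]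
  exact fun i => sub_nonneg.mpr (h i)

variable [Fintype n]

theorem mul_mul_conjTranspose_le {m : Type*} [Fintype m] {A B : Matrix n n 𝕜} (h : A ≤ B)
    (P : Matrix m n 𝕜) : P * A * Pᴴ ≤ P * B * Pᴴ := by
  rw [le_iff, ← Matrix.sub_mul, ← Matrix.mul_sub]
  exact (le_iff.mp h).mul_mul_conjTranspose_same P

theorem conjTranspose_mul_mul_le {m : Type*} [Fintype m] {A B : Matrix n n 𝕜} (h : A ≤ B)
    (P : Matrix n m 𝕜) : Pᴴ * A * P ≤ Pᴴ * B * P := by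
  rw [le_iff, ← Matrix.sub_mul, ← Matrix.mul_sub]
  exact (le_iff.mp h).conjTranspose_mul_mul_same P

variable [DecidableEq n]

theorem IsHermitian.smul_one_le_iff {S : Matrix n n 𝕜} (hS : S.IsHermitian) {a : ℝ} :
    a • (1 : Matrix n n 𝕜) ≤ S ↔ ∀ i, a ≤ hS.eigenvalues i := by
  rw [← Algebra.algebraMap_eq_smul_one, algebraMap_le_iff_le_spectrum hS.isSelfAdjoint,
    hS.spectrum_real_eq_range_eigenvalues]
  simp

theorem IsHermitian.le_smul_one_iff {S : Matrix n n 𝕜} (hS : S.IsHermitian) {b : ℝ} :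
    S ≤ b • (1 : Matrix n n 𝕜) ↔ ∀ i, hS.eigenvalues i ≤ b := by
  rw [← Algebra.algebraMap_eq_smul_one, le_algebraMap_iff_spectrum_le hS.isSelfAdjoint,
    hS.spectrum_real_eq_range_eigenvalues]
  simp

theorem PosDef.spectrum_inv {B : Matrix n n 𝕜} (hB : B.PosDef) :
    spectrum ℝ B⁻¹ = (spectrum ℝ B)⁻¹ := by
  lift B to (Matrix n n 𝕜)ˣ using hB.isUnit
  rw [← coe_units_inv, spectrum.map_inv]

theorem inv_le_smul_one_of_smul_one_le {B : Matrix n n 𝕜} {a : ℝ} (ha : 0 < a)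
    (h : a • (1 : Matrix n n 𝕜) ≤ B) : B⁻¹ ≤ a⁻¹ • (1 : Matrix n n 𝕜) := by
  have hB := PosDef.of_smul_one_le ha h
  rw [← Algebra.algebraMap_eq_smul_one] at h ⊢
  rw [le_algebraMap_iff_spectrum_le hB.inv.isHermitian.isSelfAdjoint, hB.spectrum_inv]
  rw [algebraMap_le_iff_le_spectrum hB.isHermitian.isSelfAdjoint] at h
  intro y hy
  simpa using inv_anti₀ ha (h _ hy)

theorem smul_one_le_inv_of_le_smul_one {B : Matrix n n 𝕜} (hB : B.PosDef) {b : ℝ}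
    (h : B ≤ b • (1 : Matrix n n 𝕜)) : b⁻¹ • (1 : Matrix n n 𝕜) ≤ B⁻¹ := by
  rw [← Algebra.algebraMap_eq_smul_one] at h ⊢
  rw [algebraMap_le_iff_le_spectrum hB.inv.isHermitian.isSelfAdjoint, hB.spectrum_inv]
  rw [le_algebraMap_iff_spectrum_le hB.isHermitian.isSelfAdjoint] at h
  intro y hy
  have hy₀ : 0 < y⁻¹ := (isStrictlyPositive_iff_posDef.mpr hB).spectrum_pos hy
  simpa using inv_anti₀ hy₀ (h _ hy)

theorem conjTranspose_mul_inv_mul_mem_Icc {m : Type*} [Fintype m] [DecidableEq m]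
    {S : Matrix n n 𝕜} {a b : ℝ} (ha : 0 < a) (haS : a • (1 : Matrix n n 𝕜) ≤ S)
    (hSb : S ≤ b • (1 : Matrix n n 𝕜)) (P : Matrix m n 𝕜) (hP : P * Pᴴ = 1) :
    Pᴴ * (P * S * Pᴴ)⁻¹ * P ∈ Set.Icc (b⁻¹ • (Pᴴ * P)) (a⁻¹ • (Pᴴ * P)) := by
  have compress (c : ℝ) : P * (c • (1 : Matrix n n 𝕜)) * Pᴴ = c • 1 := by
    rw [Matrix.mul_smul, Matrix.mul_one, Matrix.smul_mul, hP]
  have expand (c : ℝ) : Pᴴ * (c • (1 : Matrix m m 𝕜)) * P = c • (Pᴴ * P) := by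
    rw [Matrix.mul_smul, Matrix.mul_one, Matrix.smul_mul]
  have hlow : a • (1 : Matrix m m 𝕜) ≤ P * S * Pᴴ := compress a ▸ mul_mul_conjTranspose_le haS P
  have hup : P * S * Pᴴ ≤ b • (1 : Matrix m m 𝕜) := compress b ▸ mul_mul_conjTranspose_le hSb P
  constructor
  · exact expand b⁻¹ ▸ conjTranspose_mul_mul_le
      (smul_one_le_inv_of_le_smul_one (PosDef.of_smul_one_le ha hlow) hup) P
  · exact expand a⁻¹ ▸ conjTranspose_mul_mul_le (inv_le_smul_one_of_smul_one_le ha hlow) P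

end LoewnerOrder

theorem mul_dotProduct_self_le_of_smul_one_le {n : Type*} [Fintype n] [DecidableEq n]
    {M : Matrix n n ℝ} {a : ℝ} (h : a • (1 : Matrix n n ℝ) ≤ M) (x : n → ℝ) :
    a * (x ⬝ᵥ x) ≤ x ⬝ᵥ M *ᵥ x := by
  simpa [sub_mulVec, dotProduct_sub, smul_mulVec, sub_nonneg] using
    (le_iff.mp h).dotProduct_mulVec_nonneg x

theorem dotProduct_mulVec_le_mul_of_le_smul_one {n : Type*} [Fintype n] [DecidableEq n]
    {M : Matrix n n ℝ} {b : ℝ} (h : M ≤ b • (1 : Matrix n n ℝ)) (x : n → ℝ) :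
    x ⬝ᵥ M *ᵥ x ≤ b * (x ⬝ᵥ x) := by
  simpa [sub_mulVec, dotProduct_sub, smul_mulVec, sub_nonneg] using
    (le_iff.mp h).dotProduct_mulVec_nonneg x

end Matrix

namespace PHT

variable {p : ℕ}

theorem P2_mul_transpose_P2 {i j : Fin p} (hij : i ≠ j) : P2 i j * (P2 i j)ᵀ = 1 := by
  ext r s
  fin_cases r <;> fin_cases s <;> simp [P2, mul_apply, hij, hij.symm]

theorem transpose_P2_mul_P2 {i j : Fin p} (hij : i ≠ j) :
    (P2 i j)ᵀ * P2 i j = diagonal fun k => if k = i ∨ k = j then 1 else 0 := by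
  ext k l
  simp only [mul_apply, transpose_apply, Fin.sum_univ_two, P2, diagonal_apply]
  split_ifs <;> grind

theorem P1_mul_transpose_P1 (i : Fin p) : P1 i * (P1 i)ᵀ = 1 := by
  ext r s
  fin_cases r; fin_cases s
  simp [P1, mul_apply]

theorem transpose_P1_mul_P1 (i : Fin p) :
    (P1 i)ᵀ * P1 i = diagonal fun k => if k = i then 1 else 0 := by
  ext k l
  simp only [mul_apply, transpose_apply, Fin.sum_univ_one, P1, diagonal_apply]
  split_ifs <;> grind

/-- The number of blocks of `P_O` (pairs in `A1`, singletons in `A2`) that contain `k`. -/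
def coverCount (A1 : Finset (Fin p × Fin p)) (A2 : Finset (Fin p)) (k : Fin p) : ℕ :=
  (A1.filter fun ij => ij.1 = k ∨ ij.2 = k).card + if k ∈ A2 then 1 else 0

theorem coverCount_eq_max {A1 : Finset (Fin p × Fin p)} {A2 : Finset (Fin p)}
    (hA2 : A2 = Finset.univ.filter fun i => ∀ ij ∈ A1, ij.1 ≠ i ∧ ij.2 ≠ i) (k : Fin p) :
    coverCount A1 A2 k = max (A1.filter fun ij => ij.1 = k ∨ ij.2 = k).card 1 := by
  have hmem : k ∈ A2 ↔ (A1.filter fun ij => ij.1 = k ∨ ij.2 = k).card = 0 := by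
    simp [hA2, Finset.filter_eq_empty_iff, not_or]
  by_cases hk : k ∈ A2
  · simp [coverCount, hk, hmem.mp hk]
  · have := hmem.not.mp hk
    simp only [coverCount, hk, if_false]
    omega

theorem sum_transpose_mul_selection {A1 : Finset (Fin p × Fin p)} (A2 : Finset (Fin p))
    (hA1 : ∀ ij ∈ A1, ij.1 ≠ ij.2) :
    (∑ ij ∈ A1, (P2 ij.1 ij.2)ᵀ * P2 ij.1 ij.2) + ∑ i ∈ A2, (P1 i)ᵀ * P1 i =
      diagonal fun k => (coverCount A1 A2 k : ℝ) := by
  rw [Finset.sum_congr rfl fun ij hij => transpose_P2_mul_P2 (hA1 ij hij),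
    Finset.sum_congr rfl fun i _ => transpose_P1_mul_P1 i]
  ext k l
  by_cases hk : k = l
  · subst hk
    simp [coverCount, Matrix.sum_apply, Finset.sum_boole, eq_comm]
  · simp [Matrix.sum_apply, hk]

theorem PO_mem_Icc_smul_diagonal {S : Matrix (Fin p) (Fin p) ℝ} {a b : ℝ} (ha : 0 < a)
    (haS : a • (1 : Matrix (Fin p) (Fin p) ℝ) ≤ S) (hSb : S ≤ b • (1 : Matrix (Fin p) (Fin p) ℝ))
    {A1 : Finset (Fin p × Fin p)} (A2 : Finset (Fin p)) (hA1 : ∀ ij ∈ A1, ij.1 ≠ ij.2) :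
    PO S A1 A2 ∈ Set.Icc (b⁻¹ • diagonal fun k => (coverCount A1 A2 k : ℝ))
      (a⁻¹ • diagonal fun k => (coverCount A1 A2 k : ℝ)) := by
  have block {m : ℕ} (P : Matrix (Fin m) (Fin p) ℝ) (hP : P * Pᵀ = 1) :
      Pᵀ * (P * S * Pᵀ)⁻¹ * P ∈ Set.Icc (b⁻¹ • (Pᵀ * P)) (a⁻¹ • (Pᵀ * P)) := by
    simpa only [conjTranspose_eq_transpose_of_trivial] using
      conjTranspose_mul_inv_mul_mem_Icc ha haS hSb P
        (by rwa [conjTranspose_eq_transpose_of_trivial])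
  rw [← sum_transpose_mul_selection A2 hA1, smul_add, smul_add, Finset.smul_sum, Finset.smul_sum,
    Finset.smul_sum, Finset.smul_sum, PO]
  exact ⟨add_le_add
      (Finset.sum_le_sum fun ij hij => (block _ (P2_mul_transpose_P2 (hA1 ij hij))).1)
      (Finset.sum_le_sum fun i _ => (block _ (P1_mul_transpose_P1 i)).1),
    add_le_add
      (Finset.sum_le_sum fun ij hij => (block _ (P2_mul_transpose_P2 (hA1 ij hij))).2)
      (Finset.sum_le_sum fun i _ => (block _ (P1_mul_transpose_P1 i)).2)⟩

theorem PO_mem_Icc_smul_one {S : Matrix (Fin p) (Fin p) ℝ} {a b : ℝ} (ha : 0 < a) (hb : 0 < b)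
    (haS : a • (1 : Matrix (Fin p) (Fin p) ℝ) ≤ S) (hSb : S ≤ b • (1 : Matrix (Fin p) (Fin p) ℝ))
    {A1 : Finset (Fin p × Fin p)} (hA1 : ∀ ij ∈ A1, ij.1 ≠ ij.2) {K0 : ℕ} (hK0 : 1 ≤ K0)
    (hK0card : ∀ i : Fin p, (A1.filter fun ij => ij.1 = i ∨ ij.2 = i).card ≤ K0)
    {A2 : Finset (Fin p)}
    (hA2 : A2 = Finset.univ.filter fun i => ∀ ij ∈ A1, ij.1 ≠ i ∧ ij.2 ≠ i) :
    PO S A1 A2 ∈ Set.Icc (b⁻¹ • (1 : Matrix (Fin p) (Fin p) ℝ))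
      (((K0 : ℝ) / a) • (1 : Matrix (Fin p) (Fin p) ℝ)) := by
  have hcount (k : Fin p) : 1 ≤ (coverCount A1 A2 k : ℝ) ∧ (coverCount A1 A2 k : ℝ) ≤ K0 := by
    rw [coverCount_eq_max hA2]
    constructor <;> norm_cast
    exacts [le_max_right _ _, max_le (hK0card k) hK0]
  obtain ⟨hlow, hup⟩ := PO_mem_Icc_smul_diagonal ha haS hSb A2 hA1
  refine ⟨le_trans ?_ hlow, hup.trans ?_⟩ <;>
    rw [smul_one_eq_diagonal, ← diagonal_smul] <;> refine diagonal_le_diagonal fun k => ?_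
  · simpa using mul_le_mul_of_nonneg_left (hcount k).1 (inv_nonneg.mpr hb.le)
  · simpa [div_eq_inv_mul] using mul_le_mul_of_nonneg_left (hcount k).2 (inv_nonneg.mpr ha.le)

end PHT

theorem statement9_general {p : ℕ} (S : Matrix (Fin p) (Fin p) ℝ)
    (hPD : S.PosDef)
    (A1 : Finset (Fin p × Fin p)) (hA1 : ∀ ij ∈ A1, ij.1 < ij.2)
    (K0 : ℕ) (hK0 : 1 ≤ K0)
    (hK0card : ∀ i : Fin p, (A1.filter fun ij => ij.1 = i ∨ ij.2 = i).card ≤ K0)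
    (A2 : Finset (Fin p))
    (hA2 : A2 = Finset.univ.filter fun i => ∀ ij ∈ A1, ij.1 ≠ i ∧ ij.2 ≠ i)
    (lam1 lamp : ℝ)
    (hlam1 : (∀ i, hPD.1.eigenvalues i ≤ lam1) ∧ ∃ i, hPD.1.eigenvalues i = lam1)
    (hlamp : (∀ i, lamp ≤ hPD.1.eigenvalues i) ∧ ∃ i, hPD.1.eigenvalues i = lamp) :
    (PHT.PO S A1 A2).IsSymm ∧ (PHT.PO S A1 A2).PosDef ∧
      (∀ ζ : Fin p → ℝ, (∑ i, ζ i ^ 2) = 1 →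
        1 / lam1 ≤ ζ ⬝ᵥ (PHT.PO S A1 A2).mulVec ζ ∧
          ζ ⬝ᵥ (PHT.PO S A1 A2).mulVec ζ ≤ (K0 : ℝ) / lamp) ∧
      ∀ hPO : (PHT.PO S A1 A2).IsHermitian, ∀ i,
        1 / lam1 ≤ hPO.eigenvalues i ∧ hPO.eigenvalues i ≤ (K0 : ℝ) / lamp := by
  have hlam1_pos : 0 < lam1 := hlam1.2.elim fun i hi => hi ▸ hPD.eigenvalues_pos i
  have hlamp_pos : 0 < lamp := hlamp.2.elim fun i hi => hi ▸ hPD.eigenvalues_pos i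
  obtain ⟨hlow, hup⟩ := PHT.PO_mem_Icc_smul_one hlamp_pos hlam1_pos
    (hPD.1.smul_one_le_iff.mpr hlamp.1) (hPD.1.le_smul_one_iff.mpr hlam1.1)
    (fun ij hij => (hA1 ij hij).ne) hK0 hK0card hA2
  rw [← one_div] at hlow
  have hPO_posDef : (PHT.PO S A1 A2).PosDef := PosDef.of_smul_one_le (by positivity) hlow
  refine ⟨isHermitian_iff_isSymm.mp hPO_posDef.1, hPO_posDef, fun ζ hζ => ?_,
    fun hPO i => ⟨hPO.smul_one_le_iff.mp hlow i, hPO.le_smul_one_iff.mp hup i⟩⟩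
  have hζ_norm : ζ ⬝ᵥ ζ = 1 := by simpa [dotProduct, sq] using hζ
  simpa [hζ_norm] using And.intro (mul_dotProduct_self_le_of_smul_one_le hlow ζ)
    (dotProduct_mulVec_le_mul_of_le_smul_one hup ζ)

/-- For `Σ` symmetric positive definite with largest eigenvalue `lam1` and
smallest eigenvalue `lamp`, pairs `A₁` with each index appearing in at most `K₀` pairs,
and `A₂` the indices appearing in no pair, the matrix `P_O` is symmetric positive
definite and `1/λ₁(Σ) ≤ ζᵀ P_O ζ ≤ K₀/λ_p(Σ)` for every unit vector `ζ`; equivalently its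
eigenvalues all lie in `[1/λ₁(Σ), K₀/λ_p(Σ)]`. -/
theorem statement9 {p : ℕ} (hp : 0 < p) (S : Matrix (Fin p) (Fin p) ℝ)
    (hPD : S.PosDef)
    (A1 : Finset (Fin p × Fin p)) (hA1 : ∀ ij ∈ A1, ij.1 < ij.2)
    (K0 : ℕ) (hK0 : 1 ≤ K0)
    (hK0card : ∀ i : Fin p, (A1.filter fun ij => ij.1 = i ∨ ij.2 = i).card ≤ K0)
    (A2 : Finset (Fin p))
    (hA2 : A2 = Finset.univ.filter fun i => ∀ ij ∈ A1, ij.1 ≠ i ∧ ij.2 ≠ i)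
    (lam1 lamp : ℝ)
    (hlam1 : (∀ i, hPD.1.eigenvalues i ≤ lam1) ∧ ∃ i, hPD.1.eigenvalues i = lam1)
    (hlamp : (∀ i, lamp ≤ hPD.1.eigenvalues i) ∧ ∃ i, hPD.1.eigenvalues i = lamp) :
    (PHT.PO S A1 A2).IsSymm ∧ (PHT.PO S A1 A2).PosDef ∧
      (∀ ζ : Fin p → ℝ, (∑ i, ζ i ^ 2) = 1 →
        1 / lam1 ≤ ζ ⬝ᵥ (PHT.PO S A1 A2).mulVec ζ ∧
          ζ ⬝ᵥ (PHT.PO S A1 A2).mulVec ζ ≤ (K0 : ℝ) / lamp) ∧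
      ∀ hPO : (PHT.PO S A1 A2).IsHermitian, ∀ i,
        1 / lam1 ≤ hPO.eigenvalues i ∧ hPO.eigenvalues i ≤ (K0 : ℝ) / lamp :=
  statement9_general S hPD A1 hA1 K0 hK0 hK0card A2 hA2 lam1 lamp hlam1 hlamp
end
end

section
/- Let X₁, …, X_{n₁} and Y₁, …, Y_{n₂} (n₁, n₂ ≥ 2) be two mutually independent i.i.d. samples of p-dimensional random vectors with E(X₁) = E(Y₁) = 0 and the same covariance matrix Σ (all coordinates square-integrable), and let M ∈ ℝ^{p×p} be symmetric. Define T = (1/(n₁(n₁−1))) Σ_{s=1}^{n₁} Σ_{t≠s} X_sᵀ M X_t + (1/(n₂(n₂−1))) Σ_{s=1}^{n₂} Σ_{t≠s} Y_sᵀ M Y_t − (2/(n₁n₂)) Σ_{s=1}^{n₁} Σ_{t=1}^{n₂} X_sᵀ M Y_t. Then E(T) = 0 and Var(T) = φ(n₁,n₂) · tr((MΣ)²), where φ(n₁,n₂) = 2/(n₁(n₁−1)) + 2/(n₂(n₂−1)) + 4/(n₁n₂). -/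
open MeasureTheory ProbabilityTheory Filter Matrix
open scoped BigOperators Classical

noncomputable section

/-!
Write `B a b = W aᵀ M W b`. Since `M` is symmetric, `T = ∑_{a ≠ b} w(a, b) B a b` over all
ordered pairs of distinct observations of the pooled sample, with the symmetric weight `w` equal to
`1/(n₁(n₁-1))` within the first sample, `1/(n₂(n₂-1))` within the second and `-1/(n₁n₂)` across.
Each `B a b` is centred. For `a ≠ b`, `c ≠ d`, expanding `E(B a b · B c d)` into fourth moments of
coordinates, independence and centring kill every term in which some observation occurs only
once; what survives is `tr((MΣ)²)` for `(c, d) = (a, b)` and for `(c, d) = (b, a)`. Hence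
`Var T = 2 tr((MΣ)²) ∑ w² = φ(n₁, n₂) tr((MΣ)²)`.
-/

namespace Matrix

variable {κ R : Type*} [Fintype κ] [CommRing R]

theorem dotProduct_mulVec_eq_sum (M : Matrix κ κ R) (v w : κ → R) :
    v ⬝ᵥ M *ᵥ w = ∑ i, ∑ j, M i j * (v i * w j) := by
  simp only [dotProduct, mulVec, Finset.mul_sum]
  exact Fintype.sum_congr _ _ fun i => Fintype.sum_congr _ _ fun j => by ring

theorem dotProduct_mulVec_mul_dotProduct_mulVec (M : Matrix κ κ R) (v w x y : κ → R) :
    (v ⬝ᵥ M *ᵥ w) * (x ⬝ᵥ M *ᵥ y) =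
      ∑ i, ∑ j, ∑ k, ∑ l, M i j * M k l * (v i * w j * (x k * y l)) := by
  simp only [dotProduct_mulVec_eq_sum, Finset.sum_mul]
  simp only [Finset.mul_sum]
  exact Fintype.sum_congr _ _ fun i => Fintype.sum_congr _ _ fun j =>
    Fintype.sum_congr _ _ fun k => Fintype.sum_congr _ _ fun l => by ring

variable [DecidableEq κ]

theorem trace_mul_sq_eq_sum (M S : Matrix κ κ R) :
    trace ((M * S) ^ 2) = ∑ i, ∑ j, ∑ k, ∑ l, M i j * M k l * (S l i * S j k) := by
  simp only [trace, diag, sq, mul_apply, Finset.sum_mul, Finset.mul_sum]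
  refine Fintype.sum_congr _ _ fun i => ?_
  rw [Finset.sum_congr rfl fun j _ => Finset.sum_comm, Finset.sum_comm]
  refine Fintype.sum_congr _ _ fun j => Fintype.sum_congr _ _ fun k =>
    Fintype.sum_congr _ _ fun l => ?_
  ring

theorem trace_mul_sq_eq_sum_of_isSymm {M : Matrix κ κ R} (hM : M.IsSymm) (S : Matrix κ κ R) :
    trace ((M * S) ^ 2) = ∑ i, ∑ j, ∑ k, ∑ l, M i j * M k l * (S i k * S l j) := by
  rw [trace_mul_sq_eq_sum, Finset.sum_comm]
  refine Fintype.sum_congr _ _ fun i => Fintype.sum_congr _ _ fun j =>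
    Fintype.sum_congr _ _ fun k => Fintype.sum_congr _ _ fun l => ?_
  rw [hM.apply i j]
  ring

end Matrix

lemma mul_one_div_sq_self {K : Type*} [Field K] (x : K) : x * (1 / x) ^ 2 = 1 / x := by
  rcases eq_or_ne x 0 with rfl | hx
  · simp
  · field_simp

lemma Fin.sum_sum_ite_ne_const (n : ℕ) (c : ℝ) :
    (∑ s : Fin n, ∑ t : Fin n, if t ≠ s then c else 0) = n * (n - 1) * c := by
  rcases n with _ | n
  · simp
  · simp only [ne_eq, ite_not, Finset.sum_ite, Finset.sum_const_zero, Finset.filter_ne',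
      Finset.sum_const, Finset.mem_univ, Finset.card_erase_of_mem, Finset.card_univ,
      Fintype.card_fin, add_tsub_cancel_right, nsmul_eq_mul, zero_add]
    push_cast
    ring

lemma Finset.sum_univ_offDiag_sum_type {α β M : Type*} [Fintype α] [Fintype β] [DecidableEq α]
    [DecidableEq β] [AddCommMonoid M] (f : (α ⊕ β) × (α ⊕ β) → M) :
    ∑ q ∈ (univ : Finset (α ⊕ β)).offDiag, f q =
      (∑ s, ∑ t, if t ≠ s then f (.inl s, .inl t) else 0) +
        (∑ s, ∑ t, if t ≠ s then f (.inr s, .inr t) else 0) +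
          (∑ s, ∑ t, f (.inl s, .inr t)) + ∑ t, ∑ s, f (.inr t, .inl s) := by
  have h : (univ : Finset (α ⊕ β)).offDiag = univ.filter fun q => q.2 ≠ q.1 := by
    ext q
    simp [eq_comm]
  rw [h, Finset.sum_filter, Fintype.sum_prod_type]
  simp only [Fintype.sum_sum_type, Finset.sum_add_distrib, ne_eq, Sum.inl.injEq, Sum.inr.injEq,
    reduceCtorEq, not_false_eq_true, if_true]
  abel

namespace ProbabilityTheory

lemma iIndepFun.indepFun_prodMk₃ {Ω ι β : Type*} [MeasurableSpace Ω] {μ : Measure Ω}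
    [MeasurableSpace β] {X : ι → Ω → β} (hX : iIndepFun X μ) (hX_meas : ∀ i, Measurable (X i))
    {i j k l : ι} (hil : i ≠ l) (hjl : j ≠ l) (hkl : k ≠ l) :
    IndepFun (fun ω => (X i ω, X j ω, X k ω)) (X l) μ := by
  have hST : Disjoint ({i, j, k} : Finset ι) {l} := by simp [hil.symm, hjl.symm, hkl.symm]
  refine (hX.indepFun_finset _ _ hST hX_meas).comp
    (φ := fun v => (v ⟨i, by simp⟩, v ⟨j, by simp⟩, v ⟨k, by simp⟩))
    (ψ := fun v => v ⟨l, by simp⟩) ?_ ?_ <;> fun_prop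

end ProbabilityTheory

section LinearCombination

variable {Ω ι : Type*} [MeasurableSpace Ω] {μ : Measure Ω}

lemma integral_finset_sum_mul_eq_zero (s : Finset ι) (c : ι → ℝ) {X : ι → Ω → ℝ}
    (hX : ∀ q ∈ s, Integrable (X q) μ) (hX0 : ∀ q ∈ s, ∫ ω, X q ω ∂μ = 0) :
    ∫ ω, ∑ q ∈ s, c q * X q ω ∂μ = 0 := by
  rw [integral_finsetSum _ fun q hq => (hX q hq).const_mul _]
  exact Finset.sum_eq_zero fun q hq => by rw [integral_const_mul, hX0 q hq, mul_zero]

lemma variance_finset_sum_mul_of_integral_mul [DecidableEq ι] [IsProbabilityMeasure μ]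
    {s : Finset (ι × ι)} (hs : ∀ q ∈ s, q.swap ∈ s) {c : ι × ι → ℝ}
    (hc : ∀ q ∈ s, c q.swap = c q) {X : ι × ι → Ω → ℝ} (hX : ∀ q ∈ s, MemLp (X q) 2 μ)
    (hX0 : ∀ q ∈ s, ∫ ω, X q ω ∂μ = 0) {τ : ℝ}
    (hXX : ∀ q ∈ s, ∀ r ∈ s, ∫ ω, X q ω * X r ω ∂μ =
      (if r = q then τ else 0) + (if r = q.swap then τ else 0)) :
    variance (fun ω => ∑ q ∈ s, c q * X q ω) μ = 2 * τ * ∑ q ∈ s, c q ^ 2 := by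
  have hint : ∀ q ∈ s, ∀ r ∈ s, Integrable (fun ω => c q * c r * (X q ω * X r ω)) μ :=
    fun q hq r hr => ((hX q hq).integrable_mul (hX r hr)).const_mul _
  rw [variance_of_integral_eq_zero
    (memLp_finsetSum s fun q hq => (hX q hq).const_mul (c q)).aestronglyMeasurable.aemeasurable
    (integral_finset_sum_mul_eq_zero s c (fun q hq => (hX q hq).integrable one_le_two) hX0)]
  calc ∫ ω, (∑ q ∈ s, c q * X q ω) ^ 2 ∂μ
      = ∫ ω, ∑ q ∈ s, ∑ r ∈ s, c q * c r * (X q ω * X r ω) ∂μ := by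
        congr 1 with ω
        rw [sq, Finset.sum_mul_sum]
        exact Finset.sum_congr rfl fun q _ => Finset.sum_congr rfl fun r _ => by ring
    _ = ∑ q ∈ s, ∑ r ∈ s, c q * c r * ∫ ω, X q ω * X r ω ∂μ := by
        rw [integral_finsetSum _ fun q hq => integrable_finsetSum _ fun r hr => hint q hq r hr]
        refine Finset.sum_congr rfl fun q hq => ?_
        rw [integral_finsetSum _ fun r hr => hint q hq r hr]
        exact Finset.sum_congr rfl fun r _ => integral_const_mul _ _
    _ = ∑ q ∈ s, 2 * τ * c q ^ 2 := by
        refine Finset.sum_congr rfl fun q hq => ?_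
        rw [Finset.sum_congr rfl fun r hr => by rw [hXX q hq r hr]]
        simp only [mul_add, mul_ite, mul_zero, Finset.sum_add_distrib, Finset.sum_ite_eq',
          if_pos hq, if_pos (hs q hq), hc q hq]
        ring
    _ = 2 * τ * ∑ q ∈ s, c q ^ 2 := by rw [Finset.mul_sum]

end LinearCombination

section Moments

variable {Ω ι κ : Type*} [MeasurableSpace Ω] {μ : Measure Ω} {W : ι → Ω → κ → ℝ}
  (hmeas : ∀ a, Measurable (W a)) (hindep : iIndepFun W μ)
include hmeas hindep

lemma integral_coord_mul_eq_zero_of_iIndepFun (hmean : ∀ a i, ∫ ω, W a ω i ∂μ = 0)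
    {e f g h : ι} (hfe : f ≠ e) (hge : g ≠ e) (hhe : h ≠ e) (x : κ)
    {H : (κ → ℝ) × (κ → ℝ) × (κ → ℝ) → ℝ} (hH : Measurable H) :
    ∫ ω, W e ω x * H (W f ω, W g ω, W h ω) ∂μ = 0 := by
  have hind := (hindep.indepFun_prodMk₃ hmeas hfe hge hhe).symm.comp (measurable_pi_apply x) hH
  refine (hind.integral_fun_mul_eq_mul_integral (by fun_prop)
    (hH.comp (by fun_prop)).aestronglyMeasurable).trans ?_
  simp [hmean]

lemma integral_coord_mul_coord_eq_zero (hmean : ∀ a i, ∫ ω, W a ω i ∂μ = 0) {a b : ι}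
    (hab : a ≠ b) (i j : κ) : ∫ ω, W a ω i * W b ω j ∂μ = 0 :=
  integral_coord_mul_eq_zero_of_iIndepFun hmeas hindep hmean hab.symm hab.symm hab.symm i
    (H := fun t => t.1 j) (by fun_prop)

lemma memLp_two_coord_mul_coord (hL2 : ∀ a i, MemLp (fun ω => W a ω i) 2 μ) {a b : ι}
    (hab : a ≠ b) (i j : κ) : MemLp (fun ω => W a ω i * W b ω j) 2 μ := by
  refine (memLp_two_iff_integrable_sq (by fun_prop)).2 ?_
  have hind := (hindep.indepFun hab).comp (φ := fun v => v i ^ 2) (ψ := fun v => v j ^ 2)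
    (by fun_prop) (by fun_prop)
  simp_rw [mul_pow]
  exact hind.integrable_mul (hL2 a i).integrable_sq (hL2 b j).integrable_sq

lemma integral_coord_mul_coord_mul_coord_mul_coord_of_ne {S : Matrix κ κ ℝ}
    (hS : ∀ a i j, S i j = ∫ ω, W a ω i * W a ω j ∂μ) {a b : ι} (hab : a ≠ b) (i j k l : κ) :
    ∫ ω, W a ω i * W a ω j * (W b ω k * W b ω l) ∂μ = S i j * S k l := by
  have hind := (hindep.indepFun hab).comp (φ := fun v => v i * v j) (ψ := fun v => v k * v l)
    (by fun_prop) (by fun_prop)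
  exact (hind.integral_fun_mul_eq_mul_integral (by fun_prop) (by fun_prop)).trans
    (by rw [hS a, hS b]; rfl)

/- The arguments of `S` are ordered as in `Matrix.trace_mul_sq_eq_sum(_of_isSymm)`. -/
lemma integral_coord_mul_coord_mul_coord_mul_coord [DecidableEq ι]
    (hmean : ∀ a i, ∫ ω, W a ω i ∂μ = 0) {S : Matrix κ κ ℝ}
    (hS : ∀ a i j, S i j = ∫ ω, W a ω i * W a ω j ∂μ) {a b c d : ι} (hab : a ≠ b) (hcd : c ≠ d)
    (i j k l : κ) :
    ∫ ω, W a ω i * W b ω j * (W c ω k * W d ω l) ∂μ =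
      (if c = a ∧ d = b then S i k * S l j else 0) +
        (if c = b ∧ d = a then S l i * S j k else 0) := by
  by_cases hsame : c = a ∧ d = b
  · obtain ⟨rfl, rfl⟩ := hsame
    rw [if_pos ⟨rfl, rfl⟩, if_neg (fun h => hab h.1), add_zero,
      ← integral_coord_mul_coord_mul_coord_mul_coord_of_ne hmeas hindep hS hab]
    congr 1 with ω
    ring
  by_cases hswap : c = b ∧ d = a
  · obtain ⟨rfl, rfl⟩ := hswap
    rw [if_neg hsame, if_pos ⟨rfl, rfl⟩, zero_add,
      ← integral_coord_mul_coord_mul_coord_mul_coord_of_ne hmeas hindep hS hab]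
    congr 1 with ω
    ring
  rw [if_neg hsame, if_neg hswap, add_zero]
  -- Otherwise some index occurs only once among `a, b, c, d`, and its coordinate is centred.
  by_cases hd : d ≠ a ∧ d ≠ b
  · rw [← integral_coord_mul_eq_zero_of_iIndepFun hmeas hindep hmean hd.1.symm hd.2.symm hcd l
      (H := fun t => t.1 i * t.2.1 j * t.2.2 k) (by fun_prop)]
    congr 1 with ω
    ring
  · have hca : c ≠ a := by grind
    have hcb : c ≠ b := by grind
    rw [← integral_coord_mul_eq_zero_of_iIndepFun hmeas hindep hmean hca.symm hcb.symm hcd.symm k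
      (H := fun t => t.1 i * t.2.1 j * t.2.2 l) (by fun_prop)]
    congr 1 with ω
    ring

variable [Fintype κ]

lemma memLp_two_dotProduct_mulVec (hL2 : ∀ a i, MemLp (fun ω => W a ω i) 2 μ)
    (M : Matrix κ κ ℝ) {a b : ι} (hab : a ≠ b) :
    MemLp (fun ω => W a ω ⬝ᵥ M *ᵥ W b ω) 2 μ := by
  simp only [dotProduct_mulVec_eq_sum]
  exact memLp_finsetSum _ fun i _ => memLp_finsetSum _ fun j _ =>
    (memLp_two_coord_mul_coord hmeas hindep hL2 hab i j).const_mul _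

lemma integral_dotProduct_mulVec_eq_zero [IsFiniteMeasure μ]
    (hL2 : ∀ a i, MemLp (fun ω => W a ω i) 2 μ) (hmean : ∀ a i, ∫ ω, W a ω i ∂μ = 0)
    (M : Matrix κ κ ℝ) {a b : ι} (hab : a ≠ b) :
    ∫ ω, W a ω ⬝ᵥ M *ᵥ W b ω ∂μ = 0 := by
  have hint : ∀ i j, Integrable (fun ω => W a ω i * W b ω j) μ := fun i j =>
    (memLp_two_coord_mul_coord hmeas hindep hL2 hab i j).integrable one_le_two
  simp (disch := intros; fun_prop) only [dotProduct_mulVec_eq_sum, integral_finsetSum,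
    integral_const_mul, integral_coord_mul_coord_eq_zero hmeas hindep hmean hab]
  simp

lemma integral_dotProduct_mulVec_mul_dotProduct_mulVec [DecidableEq ι] [DecidableEq κ]
    (hL2 : ∀ a i, MemLp (fun ω => W a ω i) 2 μ) (hmean : ∀ a i, ∫ ω, W a ω i ∂μ = 0)
    {S : Matrix κ κ ℝ} (hS : ∀ a i j, S i j = ∫ ω, W a ω i * W a ω j ∂μ)
    {M : Matrix κ κ ℝ} (hM : M.IsSymm) {q r : ι × ι} (hq : q.1 ≠ q.2) (hr : r.1 ≠ r.2) :
    ∫ ω, (W q.1 ω ⬝ᵥ M *ᵥ W q.2 ω) * (W r.1 ω ⬝ᵥ M *ᵥ W r.2 ω) ∂μ =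
      (if r = q then trace ((M * S) ^ 2) else 0) +
        (if r = q.swap then trace ((M * S) ^ 2) else 0) := by
  obtain ⟨a, b⟩ := q
  obtain ⟨c, d⟩ := r
  have hint : ∀ i j k l, Integrable (fun ω => W a ω i * W b ω j * (W c ω k * W d ω l)) μ :=
    fun i j k l => (memLp_two_coord_mul_coord hmeas hindep hL2 hq i j).integrable_mul
      (memLp_two_coord_mul_coord hmeas hindep hL2 hr k l)
  simp (disch := intros; fun_prop) only [dotProduct_mulVec_mul_dotProduct_mulVec,
    integral_finsetSum, integral_const_mul,
    integral_coord_mul_coord_mul_coord_mul_coord hmeas hindep hmean hS hq hr]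
  simp only [mul_add, Finset.sum_add_distrib, mul_ite, mul_zero, Finset.sum_ite_irrel,
    Finset.sum_const_zero, Prod.swap_prod_mk, Prod.mk.injEq,
    ← trace_mul_sq_eq_sum_of_isSymm hM, ← trace_mul_sq_eq_sum]

end Moments

section TwoSample

/- For `n ≤ 1` the weight `1 / (n * (n - 1))` is the junk value `1 / 0 = 0`, but the block of
pairs it weighs is then empty. -/
def twoSampleWeight (n1 n2 : ℕ) : (Fin n1 ⊕ Fin n2) × (Fin n1 ⊕ Fin n2) → ℝ
  | (.inl _, .inl _) => 1 / (n1 * (n1 - 1))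
  | (.inr _, .inr _) => 1 / (n2 * (n2 - 1))
  | _ => -(1 / (n1 * n2))

lemma twoSampleWeight_swap {n1 n2 : ℕ} (q : (Fin n1 ⊕ Fin n2) × (Fin n1 ⊕ Fin n2)) :
    twoSampleWeight n1 n2 q.swap = twoSampleWeight n1 n2 q := by
  obtain ⟨a | a, b | b⟩ := q <;> rfl

lemma sum_offDiag_twoSampleWeight_sq (n1 n2 : ℕ) :
    ∑ q ∈ (Finset.univ : Finset (Fin n1 ⊕ Fin n2)).offDiag, twoSampleWeight n1 n2 q ^ 2 =
      1 / (n1 * (n1 - 1)) + 1 / (n2 * (n2 - 1)) + 2 / (n1 * n2) := by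
  simp only [Finset.sum_univ_offDiag_sum_type, twoSampleWeight, Fin.sum_sum_ite_ne_const]
  simp only [Finset.sum_const, Finset.card_univ, Fintype.card_fin, nsmul_eq_mul, neg_sq]
  rw [mul_one_div_sq_self, mul_one_div_sq_self]
  linear_combination 2 * mul_one_div_sq_self ((n1 : ℝ) * n2)

lemma twoSampleU_eq_sum_offDiag {n1 n2 : ℕ} (f : Fin n1 ⊕ Fin n2 → Fin n1 ⊕ Fin n2 → ℝ)
    (hf : ∀ a b, f a b = f b a) :
    (1 / ((n1 : ℝ) * ((n1 : ℝ) - 1))) *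
          (∑ s : Fin n1, ∑ t : Fin n1, if t ≠ s then f (.inl s) (.inl t) else 0) +
        (1 / ((n2 : ℝ) * ((n2 : ℝ) - 1))) *
          (∑ s : Fin n2, ∑ t : Fin n2, if t ≠ s then f (.inr s) (.inr t) else 0) -
        (2 / ((n1 : ℝ) * (n2 : ℝ))) * ∑ s : Fin n1, ∑ t : Fin n2, f (.inl s) (.inr t) =
      ∑ q ∈ (Finset.univ : Finset (Fin n1 ⊕ Fin n2)).offDiag,
        twoSampleWeight n1 n2 q * f q.1 q.2 := by
  simp only [Finset.sum_univ_offDiag_sum_type, twoSampleWeight, ← mul_ite_zero, ← Finset.mul_sum]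
  rw [Finset.sum_comm (f := fun t s => f (.inr t) (.inl s))]
  simp only [← hf (.inl _) (.inr _)]
  ring

end TwoSample

theorem statement12_general {Ω : Type*} [MeasurableSpace Ω] (μ : Measure Ω) [IsProbabilityMeasure μ]
    {n1 n2 p : ℕ}
    (W : Fin n1 ⊕ Fin n2 → Ω → Fin p → ℝ)
    (hmeas : ∀ a, Measurable (W a))
    (hindep : iIndepFun W μ)
    (hL2 : ∀ a i, MemLp (fun ω => W a ω i) 2 μ)
    (hmean : ∀ a i, ∫ ω, W a ω i ∂μ = 0)
    (S : Matrix (Fin p) (Fin p) ℝ)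
    (hS : ∀ a i j, S i j = ∫ ω, W a ω i * W a ω j ∂μ)
    (M : Matrix (Fin p) (Fin p) ℝ) (hM : M.IsSymm)
    (T : Ω → ℝ)
    (hT : T = fun ω =>
      (1 / ((n1 : ℝ) * ((n1 : ℝ) - 1))) *
          (∑ s : Fin n1, ∑ t : Fin n1,
            if t ≠ s then W (Sum.inl s) ω ⬝ᵥ M.mulVec (W (Sum.inl t) ω) else 0) +
        (1 / ((n2 : ℝ) * ((n2 : ℝ) - 1))) *
          (∑ s : Fin n2, ∑ t : Fin n2,
            if t ≠ s then W (Sum.inr s) ω ⬝ᵥ M.mulVec (W (Sum.inr t) ω) else 0) -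
        (2 / ((n1 : ℝ) * (n2 : ℝ))) *
          ∑ s : Fin n1, ∑ t : Fin n2, W (Sum.inl s) ω ⬝ᵥ M.mulVec (W (Sum.inr t) ω)) :
    (∫ ω, T ω ∂μ = 0) ∧
      variance T μ =
        (2 / ((n1 : ℝ) * ((n1 : ℝ) - 1)) + 2 / ((n2 : ℝ) * ((n2 : ℝ) - 1)) +
            4 / ((n1 : ℝ) * (n2 : ℝ))) * Matrix.trace ((M * S) ^ 2) := by
  set s := (Finset.univ : Finset (Fin n1 ⊕ Fin n2)).offDiag
  set B : (Fin n1 ⊕ Fin n2) × (Fin n1 ⊕ Fin n2) → Ω → ℝ := fun q ω => W q.1 ω ⬝ᵥ M *ᵥ W q.2 ω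
  have hTsum : T = fun ω => ∑ q ∈ s, twoSampleWeight n1 n2 q * B q ω := by
    rw [hT]
    funext ω
    exact twoSampleU_eq_sum_offDiag (fun a b => W a ω ⬝ᵥ M *ᵥ W b ω) fun a b => by
      rw [← dotProduct_transpose_mulVec, hM.eq]
  have hB2 (q) (hq : q ∈ s) : MemLp (B q) 2 μ :=
    memLp_two_dotProduct_mulVec hmeas hindep hL2 M (Finset.mem_offDiag.1 hq).2.2
  have hB0 (q) (hq : q ∈ s) : ∫ ω, B q ω ∂μ = 0 :=
    integral_dotProduct_mulVec_eq_zero hmeas hindep hL2 hmean M (Finset.mem_offDiag.1 hq).2.2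
  refine ⟨?_, ?_⟩
  · rw [hTsum]
    exact integral_finset_sum_mul_eq_zero s _ (fun q hq => (hB2 q hq).integrable one_le_two) hB0
  · have hswap (q) (hq : q ∈ s) : q.swap ∈ s := by
      simpa [s, eq_comm] using hq
    rw [hTsum, variance_finset_sum_mul_of_integral_mul hswap (fun q _ => twoSampleWeight_swap q)
      hB2 hB0 fun q hq r hr => integral_dotProduct_mulVec_mul_dotProduct_mulVec hmeas hindep hL2
        hmean hS hM (Finset.mem_offDiag.1 hq).2.2 (Finset.mem_offDiag.1 hr).2.2,
      sum_offDiag_twoSampleWeight_sq]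
    ring

/-- For two mutually independent i.i.d. mean-zero samples `X₁,…,X_{n₁}` and
`Y₁,…,Y_{n₂}` (encoded as one jointly independent family `W` indexed by `Fin n₁ ⊕ Fin n₂`)
with common covariance `Σ`, and `M` symmetric, the two-sample U-statistic `T` satisfies
`E(T) = 0` and `Var(T) = φ(n₁,n₂) tr((MΣ)²)`,
where `φ(n₁,n₂) = 2/(n₁(n₁−1)) + 2/(n₂(n₂−1)) + 4/(n₁n₂)`. -/
theorem statement12 {Ω : Type*} [MeasurableSpace Ω] (μ : Measure Ω) [IsProbabilityMeasure μ]
    {n1 n2 p : ℕ} (hn1 : 2 ≤ n1) (hn2 : 2 ≤ n2)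
    (W : Fin n1 ⊕ Fin n2 → Ω → Fin p → ℝ)
    (hmeas : ∀ a, Measurable (W a))
    (hindep : iIndepFun W μ)
    (hidX : ∀ s s' : Fin n1, μ.map (W (Sum.inl s)) = μ.map (W (Sum.inl s')))
    (hidY : ∀ t t' : Fin n2, μ.map (W (Sum.inr t)) = μ.map (W (Sum.inr t')))
    (hL2 : ∀ a i, MemLp (fun ω => W a ω i) 2 μ)
    (hmean : ∀ a i, ∫ ω, W a ω i ∂μ = 0)
    (S : Matrix (Fin p) (Fin p) ℝ)
    (hS : ∀ a i j, S i j = ∫ ω, W a ω i * W a ω j ∂μ)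
    (M : Matrix (Fin p) (Fin p) ℝ) (hM : M.IsSymm)
    (T : Ω → ℝ)
    (hT : T = fun ω =>
      (1 / ((n1 : ℝ) * ((n1 : ℝ) - 1))) *
          (∑ s : Fin n1, ∑ t : Fin n1,
            if t ≠ s then W (Sum.inl s) ω ⬝ᵥ M.mulVec (W (Sum.inl t) ω) else 0) +
        (1 / ((n2 : ℝ) * ((n2 : ℝ) - 1))) *
          (∑ s : Fin n2, ∑ t : Fin n2,
            if t ≠ s then W (Sum.inr s) ω ⬝ᵥ M.mulVec (W (Sum.inr t) ω) else 0) -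
        (2 / ((n1 : ℝ) * (n2 : ℝ))) *
          ∑ s : Fin n1, ∑ t : Fin n2, W (Sum.inl s) ω ⬝ᵥ M.mulVec (W (Sum.inr t) ω)) :
    (∫ ω, T ω ∂μ = 0) ∧
      variance T μ =
        (2 / ((n1 : ℝ) * ((n1 : ℝ) - 1)) + 2 / ((n2 : ℝ) * ((n2 : ℝ) - 1)) +
            4 / ((n1 : ℝ) * (n2 : ℝ))) * Matrix.trace ((M * S) ^ 2) :=
  statement12_general μ W hmeas hindep hL2 hmean S hS M hM T hT
end
end
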